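/- (SOPE_n identity, finite horizon.) Under the support assumption, for any n with 0 ≤ n ≤ L, J(π_e) = E_{τ∼p_{π_b}}[Σ_{t=1}^{n} γ^{t−1} ρ_{1:t} R_t + Σ_{t=n+1}^{L} γ^{t−1} (d_{1:L−n}^{π_e}(S_{t−n},A_{t−n})/d_{1:L−n}^{π_b}(S_{t−n},A_{t−n})) ρ_{t−n+1:t} R_t], with all ratios well defined p_{π_b}-almost surely. -/

import Mathlib

open Finset

variable {S A : Type*} [Fintype S] [Fintype A] [DecidableEq S] [DecidableEq A]
  [Inhabited S] [Inhabited A]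

/-- Weight contributed by the `t`-th step of trajectory `τ` under initial
distribution `d1`, transition kernel `T` and policy `π` (`π s a = π(a|s)`,
`T s a s' = T(s'|s,a)`). -/
noncomputable def stepW (d1 : S → ℝ) (T : S → A → S → ℝ) (π : S → A → ℝ)
    (τ : ℕ → S × A) : ℕ → ℝ
  | 0 => d1 (τ 0).1 * π (τ 0).1 (τ 0).2
  | t + 1 => T (τ t).1 (τ t).2 (τ (t + 1)).1 * π (τ (t + 1)).1 (τ (t + 1)).2

/-- Probability under `p_π` of the first `n` steps (times `0, …, n-1`) of `τ`. -/
noncomputable def preP (d1 : S → ℝ) (T : S → A → S → ℝ) (π : S → A → ℝ)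
    (n : ℕ) (τ : ℕ → S × A) : ℝ :=
  ∏ t ∈ range n, stepW d1 T π τ t

/-- Extension of a length-`n` prefix to an infinite trajectory. -/
def extTraj {n : ℕ} (σ : Fin n → S × A) : ℕ → S × A :=
  fun t => if h : t < n then σ ⟨t, h⟩ else default

/-- Expectation under `p_π` of a function depending only on the first `n` steps
of the trajectory. -/
noncomputable def expVal (d1 : S → ℝ) (T : S → A → S → ℝ) (π : S → A → ℝ)
    (n : ℕ) (f : (ℕ → S × A) → ℝ) : ℝ :=
  ∑ σ : Fin n → S × A, preP d1 T π n (extTraj σ) * f (extTraj σ)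

/-- `d_t^π(s,a)`, the time-`t` state-action distribution (time is 0-indexed,
so `t = 0` is the paper's time `1`). -/
noncomputable def dSA (d1 : S → ℝ) (T : S → A → S → ℝ) (π : S → A → ℝ)
    (t : ℕ) (s : S) (a : A) : ℝ :=
  expVal d1 T π (t + 1) (fun τ => if τ t = (s, a) then 1 else 0)

/-- Single-step likelihood ratio `ρ_t = π_e(A_t|S_t)/π_b(A_t|S_t)`
(0-indexed time). -/
noncomputable def rho (πb πe : S → A → ℝ) (τ : ℕ → S × A) (t : ℕ) : ℝ :=
  πe (τ t).1 (τ t).2 / πb (τ t).1 (τ t).2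

/-- Conditional expectation under `p_π` given `(S_t, A_t) = (s, a)`, for a
function of the first `n` steps. -/
noncomputable def condExpSA (d1 : S → ℝ) (T : S → A → S → ℝ) (π : S → A → ℝ)
    (n t : ℕ) (s : S) (a : A) (f : (ℕ → S × A) → ℝ) : ℝ :=
  expVal d1 T π n (fun τ => if τ t = (s, a) then f τ else 0) / dSA d1 T π t s a

/-- Averaged state-action distribution `d_{1:Th}^π` over the first `Th` steps
with discount `γ`. -/
noncomputable def dAvg (d1 : S → ℝ) (T : S → A → S → ℝ) (π : S → A → ℝ)
    (γ : ℝ) (Th : ℕ) (s : S) (a : A) : ℝ :=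
  (∑ t ∈ range Th, γ ^ t * dSA d1 T π t s a) / (∑ t ∈ range Th, γ ^ t)

/-- Discounted average state-action occupancy `d^π` (infinite horizon),
`d^π(s,a) = (1-γ) Σ_{t≥1} γ^{t-1} d_t^π(s,a)`. -/
noncomputable def dInf (d1 : S → ℝ) (T : S → A → S → ℝ) (π : S → A → ℝ)
    (γ : ℝ) (s : S) (a : A) : ℝ :=
  (1 - γ) * ∑' t : ℕ, γ ^ t * dSA d1 T π t s a

/-- Infinite-horizon value `J(π) = E_{p_π}[Σ_{t≥1} γ^{t-1} R_t]`. -/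
noncomputable def Jinf (d1 : S → ℝ) (T : S → A → S → ℝ) (π : S → A → ℝ)
    (r : S → A → ℝ) (γ : ℝ) : ℝ :=
  ∑' t : ℕ, γ ^ t * expVal d1 T π (t + 1) (fun τ => r (τ t).1 (τ t).2)

/-- Doubly-robust weight `w(m, n)` of the paper (`m` is the paper's 1-indexed
time, with `w(0, n) = 1`). -/
noncomputable def wDR (d1 : S → ℝ) (T : S → A → S → ℝ) (πb πe : S → A → ℝ)
    (γ : ℝ) (n : ℕ) (τ : ℕ → S × A) (m : ℕ) : ℝ :=
  if m = 0 then 1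
  else if m ≤ n then ∏ j ∈ range m, rho πb πe τ j
  else (dInf d1 T πe γ (τ (m - n - 1)).1 (τ (m - n - 1)).2 /
        dInf d1 T πb γ (τ (m - n - 1)).1 (τ (m - n - 1)).2) *
      ∏ j ∈ Icc (m - n) (m - 1), rho πb πe τ j

set_option linter.unusedSectionVars false
set_option linter.unusedVariables false
set_option maxHeartbeats 1000000

/-- generalized expectation with time-varying policy -/
noncomputable def genE (d1 : S → ℝ) (T : S → A → S → ℝ) (πs : ℕ → S → A → ℝ)
    (m : ℕ) (f : (ℕ → S × A) → ℝ) : ℝ :=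
  ∑ σ : Fin m → S × A, (∏ j ∈ range m, stepW d1 T (πs j) (extTraj σ) j) * f (extTraj σ)

lemma expVal_eq_genE (d1 : S → ℝ) (T : S → A → S → ℝ) (π : S → A → ℝ)
    (m : ℕ) (f : (ℕ → S × A) → ℝ) :
    expVal d1 T π m f = genE d1 T (fun _ => π) m f := rfl

noncomputable def genMu (d1 : S → ℝ) (T : S → A → S → ℝ) (πs : ℕ → S → A → ℝ) :
    ℕ → S × A → ℝ
  | 0 => fun x => d1 x.1 * πs 0 x.1 x.2
  | (k+1) => fun y => ∑ x : S × A, genMu d1 T πs k x * (T x.1 x.2 y.1 * πs (k+1) y.1 y.2)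

noncomputable def nuF (T : S → A → S → ℝ) (π : S → A → ℝ) (x : S × A) :
    ℕ → S × A → ℝ
  | 0 => fun y => if y = x then 1 else 0
  | (m+1) => fun y' => ∑ y : S × A, nuF T π x m y * (T y.1 y.2 y'.1 * π y'.1 y'.2)

lemma extTraj_snoc {m : ℕ} (σ : Fin m → S × A) (x : S × A) (j : ℕ) :
    extTraj (Fin.snoc σ x) j
      = if h : j < m then σ ⟨j, h⟩ else if j = m then x else default := by
  unfold extTraj
  rcases lt_trichotomy j m with h | h | h
  · rw [dif_pos (Nat.lt_succ_of_lt h), dif_pos h]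
    exact Fin.snoc_castSucc (α := fun _ => S × A) (i := ⟨j, h⟩) ..
  · subst h
    rw [dif_pos (Nat.lt_succ_self j), dif_neg (lt_irrefl j), if_pos rfl]
    exact Fin.snoc_last (α := fun _ => S × A) ..
  · rw [dif_neg (by omega), dif_neg (by omega), if_neg (by omega)]

lemma sum_snoc {X : Type*} [Fintype X] (m : ℕ) (g : (Fin (m+1) → X) → ℝ) :
    ∑ σ : Fin (m+1) → X, g σ = ∑ σ : Fin m → X, ∑ x : X, g (Fin.snoc σ x) := by
  rw [← (Fin.snocEquiv (fun _ => X)).sum_comp g]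
  rw [Fintype.sum_prod_type, Finset.sum_comm]
  rfl

lemma stepW_congr (d1 : S → ℝ) (T : S → A → S → ℝ) (π : S → A → ℝ)
    {τ τ' : ℕ → S × A} {j : ℕ} (h : ∀ i ≤ j, τ i = τ' i) :
    stepW d1 T π τ j = stepW d1 T π τ' j := by
  cases j with
  | zero => simp [stepW, h 0 le_rfl]
  | succ t => simp [stepW, h t (Nat.le_succ t), h (t+1) le_rfl]

lemma prod_stepW_congr (d1 : S → ℝ) (T : S → A → S → ℝ) (πs : ℕ → S → A → ℝ)
    {τ τ' : ℕ → S × A} {m : ℕ} (h : ∀ i < m, τ i = τ' i) :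
    ∏ j ∈ range m, stepW d1 T (πs j) τ j = ∏ j ∈ range m, stepW d1 T (πs j) τ' j := by
  refine Finset.prod_congr rfl fun j hj => ?_
  exact stepW_congr d1 T (πs j) fun i hi => h i (lt_of_le_of_lt hi (mem_range.mp hj))

lemma genE_congr_pol (d1 : S → ℝ) (T : S → A → S → ℝ) {πs πs' : ℕ → S → A → ℝ}
    {m : ℕ} (h : ∀ j < m, πs j = πs' j) (f : (ℕ → S × A) → ℝ) :
    genE d1 T πs m f = genE d1 T πs' m f := by
  unfold genE
  refine Finset.sum_congr rfl fun σ _ => ?_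
  congr 1
  exact Finset.prod_congr rfl fun j hj => by rw [h j (mem_range.mp hj)]

lemma genE_congr_fun (d1 : S → ℝ) (T : S → A → S → ℝ) (πs : ℕ → S → A → ℝ)
    (m : ℕ) {f g : (ℕ → S × A) → ℝ} (h : ∀ τ, f τ = g τ) :
    genE d1 T πs m f = genE d1 T πs m g := by
  unfold genE; exact Finset.sum_congr rfl fun σ _ => by rw [h]

/-- one-step marginalization -/
lemma genE_marg_step (d1 : S → ℝ) (T : S → A → S → ℝ) (πs : ℕ → S → A → ℝ)
    (hd1sum : ∑ s, d1 s = 1) (hTsum : ∀ s a, ∑ s', T s a s' = 1)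
    (hπsum : ∀ j s, ∑ a, πs j s a = 1)
    (m : ℕ) (f : (ℕ → S × A) → ℝ)
    (hf : ∀ τ τ' : ℕ → S × A, (∀ j < m, τ j = τ' j) → f τ = f τ') :
    genE d1 T πs (m+1) f = genE d1 T πs m f := by
  unfold genE
  rw [sum_snoc]
  refine Finset.sum_congr rfl fun σ _ => ?_
  have hcoord : ∀ x : S × A, ∀ i < m, extTraj (Fin.snoc σ x) i = extTraj σ i := by
    intro x i hi
    rw [extTraj_snoc, extTraj]
    simp [hi]
  have : ∀ x : S × A,
      (∏ j ∈ range (m+1), stepW d1 T (πs j) (extTraj (Fin.snoc σ x)) j)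
        * f (extTraj (Fin.snoc σ x))
      = (∏ j ∈ range m, stepW d1 T (πs j) (extTraj σ) j) * f (extTraj σ)
        * stepW d1 T (πs m) (extTraj (Fin.snoc σ x)) m := by
    intro x
    rw [Finset.prod_range_succ, hf _ _ (hcoord x),
      prod_stepW_congr d1 T πs (hcoord x)]
    ring
  rw [Finset.sum_congr rfl fun x _ => this x, ← Finset.mul_sum]
  have hsum1 : ∑ x : S × A, stepW d1 T (πs m) (extTraj (Fin.snoc σ x)) m = 1 := by
    have hval : ∀ x : S × A, extTraj (Fin.snoc σ x) m = x := by
      intro x; rw [extTraj_snoc]; simp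
    cases m with
    | zero =>
      rw [Fintype.sum_prod_type]
      simp only [stepW, hval]
      simp [← Finset.mul_sum, hπsum, hd1sum]
    | succ t =>
      rw [Fintype.sum_prod_type]
      simp only [stepW, hval]
      have hprev : ∀ x : S × A, extTraj (Fin.snoc σ x) t = extTraj σ t := by
        intro x; exact hcoord x t (Nat.lt_succ_self t)
      simp only [hprev]
      simp [← Finset.mul_sum, hπsum, hTsum]
  rw [hsum1, mul_one]

lemma genE_marg (d1 : S → ℝ) (T : S → A → S → ℝ) (πs : ℕ → S → A → ℝ)
    (hd1sum : ∑ s, d1 s = 1) (hTsum : ∀ s a, ∑ s', T s a s' = 1)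
    (hπsum : ∀ j s, ∑ a, πs j s a = 1)
    (m0 : ℕ) (f : (ℕ → S × A) → ℝ)
    (hf : ∀ τ τ' : ℕ → S × A, (∀ j < m0, τ j = τ' j) → f τ = f τ')
    {m : ℕ} (hm : m0 ≤ m) :
    genE d1 T πs m f = genE d1 T πs m0 f := by
  induction m, hm using Nat.le_induction with
  | base => rfl
  | succ m hm ih =>
    rw [← ih]
    exact genE_marg_step d1 T πs hd1sum hTsum hπsum m f
      (fun τ τ' h => hf τ τ' (fun j hj => h j (lt_of_lt_of_le hj hm)))

lemma genE_snoc (d1 : S → ℝ) (T : S → A → S → ℝ) (πs : ℕ → S → A → ℝ)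
    (m : ℕ) (f : (ℕ → S × A) → ℝ) :
    genE d1 T πs (m+1) f
      = ∑ σ : Fin m → S × A, (∏ j ∈ range m, stepW d1 T (πs j) (extTraj σ) j) *
          ∑ x : S × A,
            stepW d1 T (πs m) (extTraj (Fin.snoc σ x)) m * f (extTraj (Fin.snoc σ x)) := by
  unfold genE
  rw [sum_snoc]
  refine Finset.sum_congr rfl fun σ _ => ?_
  rw [Finset.mul_sum]
  refine Finset.sum_congr rfl fun x _ => ?_
  have hcoord : ∀ i < m, extTraj (Fin.snoc σ x) i = extTraj σ i := by
    intro i hi; rw [extTraj_snoc, extTraj]; simp [hi]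
  rw [Finset.prod_range_succ, prod_stepW_congr d1 T πs hcoord]
  ring

lemma extTraj_snoc_last {m : ℕ} (σ : Fin m → S × A) (x : S × A) :
    extTraj (Fin.snoc σ x) m = x := by
  rw [extTraj_snoc]; simp

lemma genE_last (d1 : S → ℝ) (T : S → A → S → ℝ) (πs : ℕ → S → A → ℝ)
    (m : ℕ) (G : S × A → ℝ) :
    genE d1 T πs (m+1) (fun τ => G (τ m)) = ∑ x : S × A, genMu d1 T πs m x * G x := by
  induction m generalizing G with
  | zero =>
    rw [genE_snoc]
    rw [Fintype.sum_unique]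
    simp only [range_zero, Finset.prod_empty, one_mul, extTraj_snoc_last]
    refine Finset.sum_congr rfl fun x _ => ?_
    show d1 _ * πs 0 _ _ * G x = genMu d1 T πs 0 x * G x
    rfl
  | succ t ih =>
    rw [genE_snoc]
    have : ∀ σ : Fin (t+1) → S × A,
        ∑ x : S × A, stepW d1 T (πs (t+1)) (extTraj (Fin.snoc σ x)) (t+1) *
            G (extTraj (Fin.snoc σ x) (t+1))
          = ∑ x : S × A, (T (extTraj σ t).1 (extTraj σ t).2 x.1 * πs (t+1) x.1 x.2) * G x := by
      intro σ
      refine Finset.sum_congr rfl fun x _ => ?_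
      have h1 : extTraj (Fin.snoc σ x) (t+1) = x := extTraj_snoc_last σ x
      have h2 : extTraj (Fin.snoc σ x) t = extTraj σ t := by
        rw [extTraj_snoc, extTraj]; simp
      show (T (extTraj (Fin.snoc σ x) t).1 (extTraj (Fin.snoc σ x) t).2
          (extTraj (Fin.snoc σ x) (t+1)).1 *
          πs (t+1) (extTraj (Fin.snoc σ x) (t+1)).1 (extTraj (Fin.snoc σ x) (t+1)).2) * _ = _
      rw [h1, h2]
    rw [Finset.sum_congr rfl fun σ _ => by rw [this σ]]
    have := ih (G := fun y => ∑ x : S × A, (T y.1 y.2 x.1 * πs (t+1) x.1 x.2) * G x)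
    rw [genE] at this
    rw [this]
    show _ = ∑ x : S × A, (∑ y : S × A, genMu d1 T πs t y *
        (T y.1 y.2 x.1 * πs (t+1) x.1 x.2)) * G x
    simp only [Finset.mul_sum, Finset.sum_mul]
    rw [Finset.sum_comm]
    exact Finset.sum_congr rfl fun x _ => Finset.sum_congr rfl fun y _ => by ring

lemma genE_two (d1 : S → ℝ) (T : S → A → S → ℝ) (πs : ℕ → S → A → ℝ)
    (π2 : S → A → ℝ) (k : ℕ) (hπ2 : ∀ j, k < j → πs j = π2)
    {t : ℕ} (hk : k ≤ t) (F : S × A → S × A → ℝ) :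
    genE d1 T πs (t+1) (fun τ => F (τ k) (τ t))
      = ∑ x : S × A, genMu d1 T πs k x * ∑ y : S × A, nuF T π2 x (t-k) y * F x y := by
  induction t, hk using Nat.le_induction generalizing F with
  | base =>
    rw [genE_last d1 T πs k (fun x => F x x)]
    refine Finset.sum_congr rfl fun x _ => ?_
    congr 1
    rw [Nat.sub_self]
    show F x x = ∑ y : S × A, (if y = x then (1:ℝ) else 0) * F x y
    simp only [ite_mul, one_mul, zero_mul]
    rw [Finset.sum_ite_eq' univ x (fun y => F x y)]
    simp
  | succ t ht ih =>
    rw [genE_snoc]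
    have hstep : ∀ σ : Fin (t+1) → S × A,
        ∑ x : S × A, stepW d1 T (πs (t+1)) (extTraj (Fin.snoc σ x)) (t+1) *
            F (extTraj (Fin.snoc σ x) k) (extTraj (Fin.snoc σ x) (t+1))
          = ∑ x : S × A, (T (extTraj σ t).1 (extTraj σ t).2 x.1 * π2 x.1 x.2) *
              F (extTraj σ k) x := by
      intro σ
      refine Finset.sum_congr rfl fun x _ => ?_
      have h1 : extTraj (Fin.snoc σ x) (t+1) = x := extTraj_snoc_last σ x
      have h2 : extTraj (Fin.snoc σ x) t = extTraj σ t := by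
        rw [extTraj_snoc, extTraj]; simp
      have h3 : extTraj (Fin.snoc σ x) k = extTraj σ k := by
        rw [extTraj_snoc, extTraj]
        have : k < t + 1 := Nat.lt_succ_of_le ht
        simp [this]
      show (T (extTraj (Fin.snoc σ x) t).1 (extTraj (Fin.snoc σ x) t).2
          (extTraj (Fin.snoc σ x) (t+1)).1 *
          πs (t+1) (extTraj (Fin.snoc σ x) (t+1)).1 (extTraj (Fin.snoc σ x) (t+1)).2) * _ = _
      rw [h1, h2, h3, hπ2 (t+1) (Nat.lt_succ_of_le ht)]
    rw [Finset.sum_congr rfl fun σ _ => by rw [hstep σ]]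
    have := ih (fun u v => ∑ x : S × A, (T v.1 v.2 x.1 * π2 x.1 x.2) * F u x)
    rw [genE] at this
    rw [this]
    refine Finset.sum_congr rfl fun u _ => ?_
    congr 1
    have hsub : t + 1 - k = (t - k) + 1 := by omega
    rw [hsub]
    show ∑ v : S × A, nuF T π2 u (t-k) v *
        ∑ x : S × A, (T v.1 v.2 x.1 * π2 x.1 x.2) * F u x
      = ∑ x : S × A, (∑ v : S × A, nuF T π2 u (t-k) v * (T v.1 v.2 x.1 * π2 x.1 x.2)) * F u x
    simp only [Finset.mul_sum, Finset.sum_mul]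
    rw [Finset.sum_comm]
    exact Finset.sum_congr rfl fun x _ => Finset.sum_congr rfl fun y _ => by ring

lemma genMu_congr (d1 : S → ℝ) (T : S → A → S → ℝ) {πs πs' : ℕ → S → A → ℝ}
    {k : ℕ} (h : ∀ j ≤ k, πs j = πs' j) :
    genMu d1 T πs k = genMu d1 T πs' k := by
  induction k with
  | zero => funext x; show d1 x.1 * πs 0 x.1 x.2 = _; rw [h 0 le_rfl]; rfl
  | succ k ih =>
    funext y
    show ∑ x : S × A, genMu d1 T πs k x * (T x.1 x.2 y.1 * πs (k+1) y.1 y.2) = _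
    rw [ih (fun j hj => h j (Nat.le_succ_of_le hj)), h (k+1) le_rfl]
    rfl

lemma genMu_nonneg (d1 : S → ℝ) (T : S → A → S → ℝ) (πs : ℕ → S → A → ℝ)
    (hd1 : ∀ s, 0 ≤ d1 s) (hT : ∀ s a s', 0 ≤ T s a s')
    (hπ : ∀ j s a, 0 ≤ πs j s a) (k : ℕ) (x : S × A) :
    0 ≤ genMu d1 T πs k x := by
  induction k generalizing x with
  | zero => exact mul_nonneg (hd1 _) (hπ _ _ _)
  | succ k ih =>
    exact Finset.sum_nonneg fun y _ =>
      mul_nonneg (ih y) (mul_nonneg (hT _ _ _) (hπ _ _ _))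

lemma genMu_supp (d1 : S → ℝ) (T : S → A → S → ℝ) (πb πe : S → A → ℝ)
    (hd1 : ∀ s, 0 ≤ d1 s) (hT : ∀ s a s', 0 ≤ T s a s')
    (hπb : ∀ s a, 0 ≤ πb s a) (hπe : ∀ s a, 0 ≤ πe s a)
    (hsupp : ∀ s a, 0 < πe s a → 0 < πb s a)
    (k : ℕ) (x : S × A) (h0 : genMu d1 T (fun _ => πb) k x = 0) :
    genMu d1 T (fun _ => πe) k x = 0 := by
  have hbe : ∀ s a, πb s a = 0 → πe s a = 0 := by
    intro s a hb
    by_contra h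
    have := hsupp s a (lt_of_le_of_ne (hπe s a) (Ne.symm h))
    rw [hb] at this; exact lt_irrefl 0 this
  induction k generalizing x with
  | zero =>
    have : d1 x.1 * πb x.1 x.2 = 0 := h0
    show d1 x.1 * πe x.1 x.2 = 0
    rcases mul_eq_zero.mp this with h | h
    · rw [h, zero_mul]
    · rw [hbe _ _ h, mul_zero]
  | succ k ih =>
    have hterms := (Finset.sum_eq_zero_iff_of_nonneg (fun y _ =>
      mul_nonneg (genMu_nonneg d1 T (fun _ => πb) hd1 hT (fun _ => hπb) k y)
        (mul_nonneg (hT _ _ _) (hπb _ _)))).mp h0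
    show ∑ y : S × A, genMu d1 T (fun _ => πe) k y * (T y.1 y.2 x.1 * πe x.1 x.2) = 0
    refine Finset.sum_eq_zero fun y _ => ?_
    have hy := hterms y (Finset.mem_univ y)
    rcases mul_eq_zero.mp hy with h | h
    · rw [ih y h, zero_mul]
    · rcases mul_eq_zero.mp h with h | h
      · rw [h, zero_mul, mul_zero]
      · rw [hbe _ _ h, mul_zero, mul_zero]

lemma stepW_mul_rho (d1 : S → ℝ) (T : S → A → S → ℝ) (πb πe : S → A → ℝ)
    (hπe : ∀ s a, 0 ≤ πe s a)
    (hsupp : ∀ s a, 0 < πe s a → 0 < πb s a)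
    (τ : ℕ → S × A) (j : ℕ) :
    stepW d1 T πb τ j * rho πb πe τ j = stepW d1 T πe τ j := by
  have key : ∀ (c : ℝ) (s : S) (a : A),
      c * πb s a * (πe s a / πb s a) = c * πe s a := by
    intro c s a
    rcases eq_or_ne (πb s a) 0 with h | h
    · have he : πe s a = 0 := by
        by_contra he
        have := hsupp s a (lt_of_le_of_ne (hπe s a) (Ne.symm he))
        rw [h] at this; exact lt_irrefl 0 this
      rw [h, he]; ring
    · field_simp
  cases j with
  | zero => exact key (d1 (τ 0).1) (τ 0).1 (τ 0).2
  | succ t => exact key (T (τ t).1 (τ t).2 (τ (t+1)).1) (τ (t+1)).1 (τ (t+1)).2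

lemma genE_add (d1 : S → ℝ) (T : S → A → S → ℝ) (πs : ℕ → S → A → ℝ)
    (m : ℕ) (f g : (ℕ → S × A) → ℝ) :
    genE d1 T πs m (fun τ => f τ + g τ) = genE d1 T πs m f + genE d1 T πs m g := by
  unfold genE
  rw [← Finset.sum_add_distrib]
  exact Finset.sum_congr rfl fun σ _ => by ring

lemma genE_sum (d1 : S → ℝ) (T : S → A → S → ℝ) (πs : ℕ → S → A → ℝ)
    (m : ℕ) {ι : Type*} (s : Finset ι) (F : ι → (ℕ → S × A) → ℝ) :
    genE d1 T πs m (fun τ => ∑ i ∈ s, F i τ) = ∑ i ∈ s, genE d1 T πs m (F i) := by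
  unfold genE
  rw [Finset.sum_comm]
  exact Finset.sum_congr rfl fun σ _ => by rw [Finset.mul_sum]

lemma genE_cmul (d1 : S → ℝ) (T : S → A → S → ℝ) (πs : ℕ → S → A → ℝ)
    (m : ℕ) (c : ℝ) (f : (ℕ → S × A) → ℝ) :
    genE d1 T πs m (fun τ => c * f τ) = c * genE d1 T πs m f := by
  unfold genE
  rw [Finset.mul_sum]
  exact Finset.sum_congr rfl fun σ _ => by ring

lemma genE_rho (d1 : S → ℝ) (T : S → A → S → ℝ) (πb πe : S → A → ℝ)
    (hπe : ∀ s a, 0 ≤ πe s a)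
    (hsupp : ∀ s a, 0 < πe s a → 0 < πb s a)
    (L : ℕ) (I : Finset ℕ) (hI : I ⊆ range L) (f : (ℕ → S × A) → ℝ) :
    genE d1 T (fun _ => πb) L (fun τ => (∏ j ∈ I, rho πb πe τ j) * f τ)
      = genE d1 T (fun j => if j ∈ I then πe else πb) L f := by
  unfold genE
  refine Finset.sum_congr rfl fun σ _ => ?_
  rw [← mul_assoc]
  congr 1
  have h1 : ∏ j ∈ I, rho πb πe (extTraj σ) j
      = ∏ j ∈ range L, if j ∈ I then rho πb πe (extTraj σ) j else 1 := by
    rw [Finset.prod_ite_mem, Finset.inter_eq_right.mpr hI]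
  rw [h1, ← Finset.prod_mul_distrib]
  refine Finset.prod_congr rfl fun j _ => ?_
  by_cases hj : j ∈ I
  · show _ * _ = stepW d1 T (if j ∈ I then πe else πb) (extTraj σ) j
    rw [if_pos hj, if_pos hj, stepW_mul_rho d1 T πb πe hπe hsupp]
  · show _ * _ = stepW d1 T (if j ∈ I then πe else πb) (extTraj σ) j
    rw [if_neg hj, if_neg hj, mul_one]

lemma term_e (d1 : S → ℝ) (T : S → A → S → ℝ) (πe : S → A → ℝ)
    (hd1sum : ∑ s, d1 s = 1) (hTsum : ∀ s a, ∑ s', T s a s' = 1)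
    (hπesum : ∀ s, ∑ a, πe s a = 1)
    {L k t : ℕ} (hk : k ≤ t) (htL : t < L) (F : S × A → S × A → ℝ) :
    genE d1 T (fun _ => πe) L (fun τ => F (τ k) (τ t))
      = ∑ x : S × A, genMu d1 T (fun _ => πe) k x *
          ∑ y : S × A, nuF T πe x (t-k) y * F x y := by
  rw [genE_marg d1 T (fun _ => πe) hd1sum hTsum (fun _ => hπesum) (t+1)
    (fun τ => F (τ k) (τ t))
    (fun τ τ' h => by
      show F (τ k) (τ t) = F (τ' k) (τ' t)
      rw [h k (Nat.lt_succ_of_le hk), h t (Nat.lt_succ_self t)]) htL]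
  exact genE_two d1 T (fun _ => πe) πe k (fun _ _ => rfl) hk F

lemma term_b (d1 : S → ℝ) (T : S → A → S → ℝ) (πb πe : S → A → ℝ)
    (hd1sum : ∑ s, d1 s = 1) (hTsum : ∀ s a, ∑ s', T s a s' = 1)
    (hπbsum : ∀ s, ∑ a, πb s a = 1) (hπesum : ∀ s, ∑ a, πe s a = 1)
    (hπe : ∀ s a, 0 ≤ πe s a)
    (hsupp : ∀ s a, 0 < πe s a → 0 < πb s a)
    {L k t : ℕ} (I : Finset ℕ) (hI : I ⊆ range L)
    (hk : k ≤ t) (htL : t < L)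
    (hIe : ∀ j, k < j → j ≤ t → j ∈ I) (F : S × A → S × A → ℝ) :
    genE d1 T (fun _ => πb) L
        (fun τ => (∏ j ∈ I, rho πb πe τ j) * F (τ k) (τ t))
      = ∑ x : S × A, genMu d1 T (fun j => if j ∈ I then πe else πb) k x *
          ∑ y : S × A, nuF T πe x (t-k) y * F x y := by
  rw [genE_rho d1 T πb πe hπe hsupp L I hI]
  set πs1 : ℕ → S → A → ℝ := fun j => if j ∈ I then πe else πb with hπs1
  have hπs1sum : ∀ j s, ∑ a, πs1 j s a = 1 := by
    intro j s
    rw [hπs1]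
    by_cases hj : j ∈ I
    · simp only [if_pos hj]; exact hπesum s
    · simp only [if_neg hj]; exact hπbsum s
  rw [genE_marg d1 T πs1 hd1sum hTsum hπs1sum (t+1)
    (fun τ => F (τ k) (τ t))
    (fun τ τ' h => by
      show F (τ k) (τ t) = F (τ' k) (τ' t)
      rw [h k (Nat.lt_succ_of_le hk), h t (Nat.lt_succ_self t)]) htL]
  set πs2 : ℕ → S → A → ℝ := fun j => if k < j then πe else πs1 j with hπs2
  have hpol : ∀ j < t + 1, πs1 j = πs2 j := by
    intro j hj
    show πs1 j = if k < j then πe else πs1 j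
    by_cases hkj : k < j
    · rw [if_pos hkj]
      show (if j ∈ I then πe else πb) = πe
      rw [if_pos (hIe j hkj (Nat.lt_succ_iff.mp hj))]
    · rw [if_neg hkj]
  rw [genE_congr_pol d1 T hpol]
  rw [genE_two d1 T πs2 πe k
    (fun j hj => by
      show (if k < j then πe else πs1 j) = πe
      rw [if_pos hj]) hk F]
  refine Finset.sum_congr rfl fun x _ => ?_
  have hmu : genMu d1 T πs2 k = genMu d1 T πs1 k :=
    genMu_congr d1 T (fun j hj => by
      show (if k < j then πe else πs1 j) = πs1 j
      rw [if_neg (by omega)])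
  rw [hmu]

lemma dSA_eq_genMu (d1 : S → ℝ) (T : S → A → S → ℝ) (π : S → A → ℝ)
    (t : ℕ) (x : S × A) :
    dSA d1 T π t x.1 x.2 = genMu d1 T (fun _ => π) t x := by
  show genE d1 T (fun _ => π) (t+1) (fun τ => if τ t = (x.1, x.2) then 1 else 0) = _
  rw [genE_last d1 T (fun _ => π) t (fun y => if y = (x.1, x.2) then (1:ℝ) else 0)]
  simp only [mul_ite, mul_one, mul_zero]
  rw [Finset.sum_ite_eq' univ (x.1, x.2) (genMu d1 T (fun _ => π) t)]
  simp

lemma tail_eq (d1 : S → ℝ) (T : S → A → S → ℝ) (πb πe : S → A → ℝ) (γ : ℝ)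
    (hd1 : ∀ s, 0 ≤ d1 s) (hT : ∀ s a s', 0 ≤ T s a s')
    (hπb : ∀ s a, 0 ≤ πb s a) (hπe : ∀ s a, 0 ≤ πe s a)
    (hsupp : ∀ s a, 0 < πe s a → 0 < πb s a) (hγ0 : 0 ≤ γ)
    (L n : ℕ) (hlt : n < L) (Q : S × A → ℝ) :
    ∑ i ∈ range (L-n), γ^(n+i) *
        ∑ x : S × A, genMu d1 T (fun _ => πe) i x * Q x
      = ∑ i ∈ range (L-n), γ^(n+i) *
          ∑ x : S × A, genMu d1 T (fun _ => πb) i x *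
            (dAvg d1 T πe γ (L-n) x.1 x.2 / dAvg d1 T πb γ (L-n) x.1 x.2 * Q x) := by
  simp only [Finset.mul_sum]
  rw [Finset.sum_comm]
  conv_rhs => rw [Finset.sum_comm]
  refine Finset.sum_congr rfl fun x _ => ?_
  -- core cancellation
  have hD1 : (1:ℝ) ≤ ∑ t ∈ range (L-n), γ^t := by
    calc (1:ℝ) = γ^0 := (pow_zero γ).symm
    _ ≤ ∑ t ∈ range (L-n), γ^t :=
      Finset.single_le_sum (fun i _ => pow_nonneg hγ0 i)
        (Finset.mem_range.mpr (by omega))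
  have hD0 : (∑ t ∈ range (L-n), γ^t) ≠ 0 := by linarith
  have hdA : ∀ π : S → A → ℝ, dAvg d1 T π γ (L-n) x.1 x.2
      = (∑ i ∈ range (L-n), γ^i * genMu d1 T (fun _ => π) i x) /
          (∑ t ∈ range (L-n), γ^t) := by
    intro π
    unfold dAvg
    congr 1
    exact Finset.sum_congr rfl fun t _ => by rw [dSA_eq_genMu]
  set Ne := ∑ i ∈ range (L-n), γ^i * genMu d1 T (fun _ => πe) i x with hNe
  set Nb := ∑ i ∈ range (L-n), γ^i * genMu d1 T (fun _ => πb) i x with hNb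
  set D := ∑ t ∈ range (L-n), γ^t with hD
  have key : dAvg d1 T πe γ (L-n) x.1 x.2 / dAvg d1 T πb γ (L-n) x.1 x.2 * Nb = Ne := by
    rw [hdA πe, hdA πb]
    have hdiv : (Ne/D)/(Nb/D) = Ne/Nb := by
      rw [div_eq_mul_inv (Ne/D), inv_div, div_mul_div_comm, mul_comm Ne D,
        mul_div_mul_left _ _ hD0]
    rw [hdiv]
    by_cases hNb0 : Nb = 0
    · have hNb0' : ∑ i ∈ range (L-n), γ^i * genMu d1 T (fun _ => πb) i x = 0 := by
        rw [← hNb]; exact hNb0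
      have hterms := (Finset.sum_eq_zero_iff_of_nonneg (fun i _ =>
        mul_nonneg (pow_nonneg hγ0 i)
          (genMu_nonneg d1 T (fun _ => πb) hd1 hT (fun _ => hπb) i x))).mp hNb0'
      have hNe0 : Ne = 0 := by
        rw [hNe]
        refine Finset.sum_eq_zero fun i hi => ?_
        rcases mul_eq_zero.mp (hterms i hi) with h | h
        · rw [h, zero_mul]
        · rw [genMu_supp d1 T πb πe hd1 hT hπb hπe hsupp i x h, mul_zero]
      rw [hNb0, hNe0, mul_zero]
    · exact div_mul_cancel₀ Ne hNb0
  calc ∑ i ∈ range (L-n), γ^(n+i) * (genMu d1 T (fun _ => πe) i x * Q x)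
      = (γ^n * Q x) * Ne := by
        rw [hNe, Finset.mul_sum]
        exact Finset.sum_congr rfl fun i _ => by rw [pow_add]; ring
    _ = (γ^n * Q x) * (dAvg d1 T πe γ (L-n) x.1 x.2 / dAvg d1 T πb γ (L-n) x.1 x.2 * Nb) := by
        rw [key]
    _ = ∑ i ∈ range (L-n), γ^(n+i) * (genMu d1 T (fun _ => πb) i x *
          (dAvg d1 T πe γ (L-n) x.1 x.2 / dAvg d1 T πb γ (L-n) x.1 x.2 * Q x)) := by
        rw [hNb, Finset.mul_sum, Finset.mul_sum]
        exact Finset.sum_congr rfl fun i _ => by rw [pow_add]; ring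

/-- SOPE_n identity, finite horizon: for `0 ≤ n ≤ L`,
`J(π_e) = E_{τ∼p_πb}[Σ_(t=1)^n γ^(t-1) ρ_(1:t) R_t
  + Σ_(t=n+1)^L γ^(t-1) (d_(1:L-n)^πe(S_(t-n),A_(t-n))/d_(1:L-n)^πb(S_(t-n),A_(t-n))) ρ_(t-n+1:t) R_t]`
(0-indexed in Lean). -/
theorem sope_identity_finite
    (d1 : S → ℝ) (T : S → A → S → ℝ) (πb πe : S → A → ℝ) (r : S → A → ℝ)
    (γ : ℝ) (L n : ℕ) (hL : 0 < L) (hnL : n ≤ L)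
    (hd1 : ∀ s, 0 ≤ d1 s) (hd1sum : ∑ s, d1 s = 1)
    (hT : ∀ s a s', 0 ≤ T s a s') (hTsum : ∀ s a, ∑ s', T s a s' = 1)
    (hπb : ∀ s a, 0 ≤ πb s a) (hπbsum : ∀ s, ∑ a, πb s a = 1)
    (hπe : ∀ s a, 0 ≤ πe s a) (hπesum : ∀ s, ∑ a, πe s a = 1)
    (hγ0 : 0 ≤ γ) (hγ1 : γ < 1)
    (hsupp : ∀ s a, 0 < πe s a → 0 < πb s a) :
    expVal d1 T πe L (fun τ => ∑ t ∈ range L, γ ^ t * r (τ t).1 (τ t).2)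
      = expVal d1 T πb L (fun τ =>
          (∑ t ∈ range n, γ ^ t *
            (∏ j ∈ range (t + 1), rho πb πe τ j) * r (τ t).1 (τ t).2)
          + ∑ t ∈ Ico n L, γ ^ t *
              (dAvg d1 T πe γ (L - n) (τ (t - n)).1 (τ (t - n)).2 /
                dAvg d1 T πb γ (L - n) (τ (t - n)).1 (τ (t - n)).2) *
              (∏ j ∈ Icc (t - n + 1) t, rho πb πe τ j) * r (τ t).1 (τ t).2) := by
  classical
  -- LHS reduction
  have hL1 : expVal d1 T πe L (fun τ => ∑ t ∈ range L, γ ^ t * r (τ t).1 (τ t).2)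
      = ∑ t ∈ range L, γ ^ t *
          genE d1 T (fun _ => πe) L (fun τ => r (τ t).1 (τ t).2) := by
    rw [expVal_eq_genE,
      genE_sum d1 T (fun _ => πe) L (range L) (fun t τ => γ ^ t * r (τ t).1 (τ t).2)]
    exact Finset.sum_congr rfl fun t _ =>
      genE_cmul d1 T (fun _ => πe) L (γ ^ t) (fun τ => r (τ t).1 (τ t).2)
  have hsplit : ∀ g : ℕ → ℝ,
      ∑ t ∈ range L, g t = ∑ t ∈ range n, g t + ∑ t ∈ Ico n L, g t := by
    intro g
    rw [range_eq_Ico, ← Finset.sum_Ico_consecutive g (Nat.zero_le n) hnL, ← range_eq_Ico]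
  have hLHS : expVal d1 T πe L (fun τ => ∑ t ∈ range L, γ ^ t * r (τ t).1 (τ t).2)
      = (∑ t ∈ range n, γ ^ t * ∑ x : S × A, genMu d1 T (fun _ => πe) t x *
            ∑ y : S × A, nuF T πe x (t - t) y * r y.1 y.2)
        + ∑ t ∈ Ico n L, γ ^ t * ∑ x : S × A, genMu d1 T (fun _ => πe) (t - n) x *
            ∑ y : S × A, nuF T πe x n y * r y.1 y.2 := by
    rw [hL1, hsplit]
    congr 1
    · refine Finset.sum_congr rfl fun t ht => ?_
      have htL : t < L := lt_of_lt_of_le (mem_range.mp ht) hnL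
      rw [term_e d1 T πe hd1sum hTsum hπesum le_rfl htL (fun _ v => r v.1 v.2)]
    · refine Finset.sum_congr rfl fun t ht => ?_
      have h1 := mem_Ico.mp ht
      rw [term_e d1 T πe hd1sum hTsum hπesum (Nat.sub_le t n) h1.2 (fun _ v => r v.1 v.2)]
      have h2 : t - (t - n) = n := by omega
      rw [h2]
  -- RHS reduction
  have hR1 : expVal d1 T πb L (fun τ =>
          (∑ t ∈ range n, γ ^ t *
            (∏ j ∈ range (t + 1), rho πb πe τ j) * r (τ t).1 (τ t).2)
          + ∑ t ∈ Ico n L, γ ^ t *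
              (dAvg d1 T πe γ (L - n) (τ (t - n)).1 (τ (t - n)).2 /
                dAvg d1 T πb γ (L - n) (τ (t - n)).1 (τ (t - n)).2) *
              (∏ j ∈ Icc (t - n + 1) t, rho πb πe τ j) * r (τ t).1 (τ t).2)
      = (∑ t ∈ range n, genE d1 T (fun _ => πb) L (fun τ => γ ^ t *
            (∏ j ∈ range (t + 1), rho πb πe τ j) * r (τ t).1 (τ t).2))
        + ∑ t ∈ Ico n L, genE d1 T (fun _ => πb) L (fun τ => γ ^ t *
              (dAvg d1 T πe γ (L - n) (τ (t - n)).1 (τ (t - n)).2 /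
                dAvg d1 T πb γ (L - n) (τ (t - n)).1 (τ (t - n)).2) *
              (∏ j ∈ Icc (t - n + 1) t, rho πb πe τ j) * r (τ t).1 (τ t).2) := by
    rw [expVal_eq_genE, genE_add, genE_sum, genE_sum]
  have hB1 : ∀ t ∈ range n,
      genE d1 T (fun _ => πb) L (fun τ => γ ^ t *
          (∏ j ∈ range (t + 1), rho πb πe τ j) * r (τ t).1 (τ t).2)
        = γ ^ t * ∑ x : S × A, genMu d1 T (fun _ => πe) t x *
            ∑ y : S × A, nuF T πe x (t - t) y * r y.1 y.2 := by
    intro t ht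
    have htL : t < L := lt_of_lt_of_le (mem_range.mp ht) hnL
    rw [genE_congr_fun d1 T (fun _ => πb) L
      (g := fun τ => γ ^ t * ((∏ j ∈ range (t + 1), rho πb πe τ j) * r (τ t).1 (τ t).2))
      (fun τ => by ring)]
    rw [genE_cmul]
    congr 1
    refine (term_b d1 T πb πe hd1sum hTsum hπbsum hπesum hπe hsupp (range (t+1))
      (fun j hj => mem_range.mpr (by have := mem_range.mp hj; omega)) le_rfl htL
      (fun j hj hj' => mem_range.mpr (by omega)) (fun _ v => r v.1 v.2)).trans ?_
    have hmu : genMu d1 T (fun j => if j ∈ range (t+1) then πe else πb) t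
        = genMu d1 T (fun _ => πe) t :=
      genMu_congr d1 T (fun j hj => if_pos (mem_range.mpr (by omega)))
    rw [hmu]
  have hB2 : ∀ t ∈ Ico n L,
      genE d1 T (fun _ => πb) L (fun τ => γ ^ t *
          (dAvg d1 T πe γ (L - n) (τ (t - n)).1 (τ (t - n)).2 /
            dAvg d1 T πb γ (L - n) (τ (t - n)).1 (τ (t - n)).2) *
          (∏ j ∈ Icc (t - n + 1) t, rho πb πe τ j) * r (τ t).1 (τ t).2)
        = γ ^ t * ∑ x : S × A, genMu d1 T (fun _ => πb) (t - n) x *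
            (dAvg d1 T πe γ (L - n) x.1 x.2 / dAvg d1 T πb γ (L - n) x.1 x.2 *
              ∑ y : S × A, nuF T πe x n y * r y.1 y.2) := by
    intro t ht
    have h1 := mem_Ico.mp ht
    rw [genE_congr_fun d1 T (fun _ => πb) L
      (g := fun τ => γ ^ t * ((∏ j ∈ Icc (t - n + 1) t, rho πb πe τ j) *
        ((dAvg d1 T πe γ (L - n) (τ (t - n)).1 (τ (t - n)).2 /
          dAvg d1 T πb γ (L - n) (τ (t - n)).1 (τ (t - n)).2) * r (τ t).1 (τ t).2)))
      (fun τ => by ring)]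
    rw [genE_cmul]
    congr 1
    refine (term_b d1 T πb πe hd1sum hTsum hπbsum hπesum hπe hsupp (Icc (t - n + 1) t)
      (fun j hj => mem_range.mpr (by have := mem_Icc.mp hj; omega)) (Nat.sub_le t n) h1.2
      (fun j hj hj' => mem_Icc.mpr ⟨by omega, hj'⟩)
      (fun u v => (dAvg d1 T πe γ (L - n) u.1 u.2 / dAvg d1 T πb γ (L - n) u.1 u.2) *
        r v.1 v.2)).trans ?_
    have hmu : genMu d1 T (fun j => if j ∈ Icc (t - n + 1) t then πe else πb) (t - n)
        = genMu d1 T (fun _ => πb) (t - n) :=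
      genMu_congr d1 T (fun j hj => if_neg (by
        rw [mem_Icc]; omega))
    rw [hmu]
    have h2 : t - (t - n) = n := by omega
    rw [h2]
    refine Finset.sum_congr rfl fun x _ => ?_
    congr 1
    rw [Finset.mul_sum]
    exact Finset.sum_congr rfl fun y _ => by ring
  rw [hLHS, hR1, Finset.sum_congr rfl hB1, Finset.sum_congr rfl hB2]
  congr 1
  -- tail equality
  rcases eq_or_lt_of_le hnL with hEq | hlt
  · subst hEq; simp
  rw [Finset.sum_Ico_eq_sum_range, Finset.sum_Ico_eq_sum_range]
  simp only [Nat.add_sub_cancel_left]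
  exact tail_eq d1 T πb πe γ hd1 hT hπb hπe hsupp hγ0 L n hlt
    (fun x => ∑ y : S × A, nuF T πe x n y * r y.1 y.2)
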